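/- Let (K,|·|) be a normed field, f ∈ K[z] a polynomial of degree n ≥ 2 having n simple zeros in K, ξ ∈ Kⁿ a root-vector of f (so ξ has pairwise distinct components), x ∈ Kⁿ, and 1 ≤ p ≤ ∞ with conjugate exponent q. Set E(x) = ‖(x − ξ)/d(ξ)‖_p. Then for all i ≠ j, |x_i − x_j| ≥ (1 − 2^{1/q} E(x)) · d_j(ξ) and |x_i − ξ_j| ≥ (1 − E(x)) · d_i(ξ). -/

import Mathlib

/-!
Write `v = (x − ξ)/d(ξ)` and `B = |ξ_i − ξ_j|`, so that `d_i(ξ), d_j(ξ) ≤ B` and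
`|x_k − ξ_k| = v_k d_k(ξ) ≤ v_k B` for `k = i, j`. The triangle inequality then gives
`|x_i − x_j| ≥ (1 − v_i − v_j) B` and `|x_i − ξ_j| ≥ (1 − v_i) B`, which may be weakened to
`d_j(ξ)` resp. `d_i(ξ)` when the coefficient is nonnegative (otherwise the bound is trivial).
Finally `v_i ≤ ‖v‖_p`, and `v_i + v_j ≤ 2^{1/q} ‖v‖_p` is the power-mean inequality
`(a + b)^p ≤ 2^{p−1} (a^p + b^p)`, since `1 − 1/p = 1/q`.
-/

open Finset Filter Topology
open scoped ENNReal

noncomputable def pnorm {n : ℕ} (p : ℝ≥0∞) (v : Fin n → ℝ) : ℝ :=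
  if p = ⊤ then ⨆ i, |v i| else (∑ i, |v i| ^ p.toReal) ^ (1 / p.toReal)

noncomputable def epow (a : ℝ) (p : ℝ≥0∞) : ℝ :=
  if p = ⊤ then 1 else a ^ (1 / p.toReal)

noncomputable def dsep {K : Type*} [NormedField K] {n : ℕ} (x : Fin n → K) (i : Fin n) : ℝ :=
  sInf {r : ℝ | ∃ j, j ≠ i ∧ r = ‖x i - x j‖}

noncomputable def Wcorr {K : Type*} [NormedField K] {n : ℕ} (f : Polynomial K)
    (x : Fin n → K) (i : Fin n) : K :=
  Polynomial.eval (x i) f / (f.leadingCoeff * ∏ j ∈ Finset.univ.erase i, (x i - x j))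

def IsRootVector {K : Type*} [NormedField K] {n : ℕ} (f : Polynomial K) (ξ : Fin n → K) : Prop :=
  ∀ z : K, Polynomial.eval z f = f.leadingCoeff * ∏ i, (z - ξ i)

section Separation

variable {K : Type*} [NormedField K] {n : ℕ}

lemma dsep_set_finite (ξ : Fin n → K) (i : Fin n) :
    {r : ℝ | ∃ j, j ≠ i ∧ r = ‖ξ i - ξ j‖}.Finite :=
  (Set.finite_range fun j => ‖ξ i - ξ j‖).subset fun _ ⟨j, _, hr⟩ => ⟨j, hr.symm⟩

lemma dsep_le_norm_sub (ξ : Fin n → K) {i j : Fin n} (hij : i ≠ j) :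
    dsep ξ i ≤ ‖ξ i - ξ j‖ :=
  csInf_le (dsep_set_finite ξ i).bddBelow ⟨j, hij.symm, rfl⟩

lemma dsep_pos {ξ : Fin n → K} (hξ : Function.Injective ξ) {i j : Fin n} (hij : i ≠ j) :
    0 < dsep ξ i := by
  obtain ⟨k, hki, hk⟩ : dsep ξ i ∈ {r : ℝ | ∃ k, k ≠ i ∧ r = ‖ξ i - ξ k‖} :=
    Set.Nonempty.csInf_mem ⟨_, j, hij.symm, rfl⟩ (dsep_set_finite ξ i)
  rw [hk, norm_pos_iff, sub_ne_zero]
  exact hξ.ne hki.symm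

lemma norm_sub_le_div_dsep_mul_norm_sub {ξ : Fin n → K} (hξ : Function.Injective ξ) (a : K)
    {i j : Fin n} (hij : i ≠ j) :
    ‖a - ξ i‖ ≤ ‖a - ξ i‖ / dsep ξ i * ‖ξ i - ξ j‖ := by
  have hd := dsep_pos hξ hij
  calc ‖a - ξ i‖ = ‖a - ξ i‖ / dsep ξ i * dsep ξ i := (div_mul_cancel₀ _ hd.ne').symm
    _ ≤ ‖a - ξ i‖ / dsep ξ i * ‖ξ i - ξ j‖ := by
      gcongr
      exact dsep_le_norm_sub ξ hij

end Separation

lemma one_sub_add_mul_le_norm_sub {E : Type*} [SeminormedAddGroup E] {x y ξ η : E}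
    {s t d : ℝ} (hx : ‖x - ξ‖ ≤ s * ‖ξ - η‖) (hy : ‖y - η‖ ≤ t * ‖ξ - η‖)
    (hd : 0 ≤ d) (hdB : d ≤ ‖ξ - η‖) :
    (1 - (s + t)) * d ≤ ‖x - y‖ := by
  rcases le_or_gt (1 - (s + t)) 0 with hst | hst
  · exact (mul_nonpos_of_nonpos_of_nonneg hst hd).trans (norm_nonneg _)
  have htri : ‖ξ - η‖ ≤ ‖x - ξ‖ + ‖x - y‖ + ‖y - η‖ := by
    calc ‖ξ - η‖ ≤ ‖ξ - x‖ + ‖x - η‖ := norm_sub_le_norm_sub_add_norm_sub ξ x η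
      _ ≤ ‖ξ - x‖ + (‖x - y‖ + ‖y - η‖) := by
          gcongr
          exact norm_sub_le_norm_sub_add_norm_sub x y η
      _ = ‖x - ξ‖ + ‖x - y‖ + ‖y - η‖ := by rw [norm_sub_rev ξ x, add_assoc]
  calc (1 - (s + t)) * d ≤ (1 - (s + t)) * ‖ξ - η‖ := by gcongr
    _ ≤ ‖x - y‖ := by linarith

section PNorm

variable {n : ℕ} {p q : ℝ≥0∞}

lemma abs_le_pnorm (hp : p ≠ 0) (v : Fin n → ℝ) (k : Fin n) : |v k| ≤ pnorm p v := by
  unfold pnorm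
  split_ifs with hpT
  · exact le_ciSup (Set.finite_range fun i => |v i|).bddAbove k
  have ht : 0 < p.toReal := ENNReal.toReal_pos hp hpT
  calc |v k| = (|v k| ^ p.toReal) ^ (1 / p.toReal) := by
        rw [one_div, Real.rpow_rpow_inv (abs_nonneg _) ht.ne']
    _ ≤ (∑ i, |v i| ^ p.toReal) ^ (1 / p.toReal) := by
        gcongr
        exact single_le_sum (f := fun i => |v i| ^ p.toReal)
          (fun i _ => by positivity) (mem_univ k)

lemma epow_eq_rpow (a : ℝ) (q : ℝ≥0∞) : epow a q = a ^ q.toReal⁻¹ := by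
  unfold epow
  split_ifs with hq <;> simp [hq]

lemma epow_eq_rpow_one_sub (hpq : 1 / p + 1 / q = 1) (a : ℝ) :
    epow a q = a ^ (1 - p.toReal⁻¹) := by
  have hp : p⁻¹ ≤ 1 := by
    rw [← hpq, one_div]
    exact le_self_add
  have hq : q⁻¹ = 1 - p⁻¹ := by
    rw [← hpq, one_div, one_div,
      ENNReal.add_sub_cancel_left (ne_top_of_le_ne_top ENNReal.one_ne_top hp)]
  rw [epow_eq_rpow, ← ENNReal.toReal_inv, hq, ENNReal.toReal_sub_of_le hp ENNReal.one_ne_top,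
    ENNReal.toReal_one, ENNReal.toReal_inv]

lemma add_le_two_rpow_mul_rpow_add_rpow {a b t : ℝ} (ha : 0 ≤ a) (hb : 0 ≤ b) (ht : 1 ≤ t) :
    a + b ≤ 2 ^ (1 - t⁻¹) * (a ^ t + b ^ t) ^ t⁻¹ := by
  have hpow : (a + b) ^ t ≤ 2 ^ (t - 1) * (a ^ t + b ^ t) := by
    exact_mod_cast NNReal.rpow_add_le_mul_rpow_add_rpow ⟨a, ha⟩ ⟨b, hb⟩ ht
  calc a + b = ((a + b) ^ t) ^ t⁻¹ := (Real.rpow_rpow_inv (by positivity) (by positivity)).symm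
    _ ≤ (2 ^ (t - 1) * (a ^ t + b ^ t)) ^ t⁻¹ := by gcongr
    _ = 2 ^ (1 - t⁻¹) * (a ^ t + b ^ t) ^ t⁻¹ := by
      rw [Real.mul_rpow (by positivity) (by positivity), ← Real.rpow_mul zero_le_two]
      congr 2
      field_simp

lemma add_le_epow_mul_pnorm (hp : 1 ≤ p) (hpq : 1 / p + 1 / q = 1) (v : Fin n → ℝ)
    {i j : Fin n} (hij : i ≠ j) : v i + v j ≤ epow 2 q * pnorm p v := by
  have hp0 : p ≠ 0 := (zero_lt_one.trans_le hp).ne'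
  have hvij : v i + v j ≤ |v i| + |v j| := add_le_add (le_abs_self _) (le_abs_self _)
  rw [epow_eq_rpow_one_sub hpq]
  by_cases hpT : p = ⊤
  · subst hpT
    have hi := abs_le_pnorm hp0 v i
    have hj := abs_le_pnorm hp0 v j
    simp only [ENNReal.toReal_top, inv_zero, sub_zero, Real.rpow_one]
    linarith
  have ht : 1 ≤ p.toReal := by
    simpa using ENNReal.toReal_mono hpT hp
  have hpair : |v i| ^ p.toReal + |v j| ^ p.toReal ≤ ∑ k, |v k| ^ p.toReal := by
    rw [← sum_pair (f := fun k => |v k| ^ p.toReal) hij]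
    exact sum_le_sum_of_subset_of_nonneg (subset_univ _) fun k _ _ => by positivity
  calc v i + v j ≤ 2 ^ (1 - p.toReal⁻¹) * (|v i| ^ p.toReal + |v j| ^ p.toReal) ^ p.toReal⁻¹ :=
        hvij.trans (add_le_two_rpow_mul_rpow_add_rpow (abs_nonneg _) (abs_nonneg _) ht)
    _ ≤ 2 ^ (1 - p.toReal⁻¹) * (∑ k, |v k| ^ p.toReal) ^ p.toReal⁻¹ := by gcongr
    _ = 2 ^ (1 - p.toReal⁻¹) * pnorm p v := by simp [pnorm, hpT]

end PNorm

theorem weierstrass_first_kind_inequalities_general {K : Type*} [NormedField K] {n : ℕ}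
    (ξ : Fin n → K) (hξ : Function.Injective ξ)
    (x : Fin n → K) (p q : ℝ≥0∞) (hp : 1 ≤ p) (hpq : 1 / p + 1 / q = 1) :
    ∀ i j : Fin n, i ≠ j →
      (1 - epow 2 q * pnorm p (fun k => ‖x k - ξ k‖ / dsep ξ k)) * dsep ξ j ≤ ‖x i - x j‖ ∧
      (1 - pnorm p (fun k => ‖x k - ξ k‖ / dsep ξ k)) * dsep ξ i ≤ ‖x i - ξ j‖ := by
  intro i j hij
  set v : Fin n → ℝ := fun k => ‖x k - ξ k‖ / dsep ξ k
  have hxi : ‖x i - ξ i‖ ≤ v i * ‖ξ i - ξ j‖ := norm_sub_le_div_dsep_mul_norm_sub hξ (x i) hij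
  have hxj : ‖x j - ξ j‖ ≤ v j * ‖ξ i - ξ j‖ := by
    rw [norm_sub_rev (ξ i)]
    exact norm_sub_le_div_dsep_mul_norm_sub hξ (x j) hij.symm
  constructor
  · calc (1 - epow 2 q * pnorm p v) * dsep ξ j ≤ (1 - (v i + v j)) * dsep ξ j := by
          gcongr
          · exact (dsep_pos hξ hij.symm).le
          · exact add_le_epow_mul_pnorm hp hpq v hij
      _ ≤ ‖x i - x j‖ := by
          refine one_sub_add_mul_le_norm_sub hxi hxj (dsep_pos hξ hij.symm).le ?_
          rw [norm_sub_rev]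
          exact dsep_le_norm_sub ξ hij.symm
  · have hvi : v i ≤ pnorm p v :=
      (le_abs_self _).trans (abs_le_pnorm (zero_lt_one.trans_le hp).ne' v i)
    calc (1 - pnorm p v) * dsep ξ i ≤ (1 - (v i + 0)) * dsep ξ i := by
          gcongr
          · exact (dsep_pos hξ hij).le
          · simpa using hvi
      _ ≤ ‖x i - ξ j‖ :=
          one_sub_add_mul_le_norm_sub hxi (by simp) (dsep_pos hξ hij).le (dsep_le_norm_sub ξ hij)

/-- If `f` has `n` simple zeros with root-vector `ξ`, then for all `i ≠ j`,
`|x_i − x_j| ≥ (1 − 2^{1/q} E(x)) d_j(ξ)` and `|x_i − ξ_j| ≥ (1 − E(x)) d_i(ξ)`,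
where `E(x) = ‖(x − ξ)/d(ξ)‖_p`. -/
theorem weierstrass_first_kind_inequalities {K : Type*} [NormedField K] {n : ℕ} (hn : 2 ≤ n)
    (f : Polynomial K) (hdeg : f.natDegree = n)
    (ξ : Fin n → K) (hroot : IsRootVector f ξ) (hξ : Function.Injective ξ)
    (x : Fin n → K) (p q : ℝ≥0∞) (hp : 1 ≤ p) (hpq : 1 / p + 1 / q = 1) :
    ∀ i j : Fin n, i ≠ j →
      (1 - epow 2 q * pnorm p (fun k => ‖x k - ξ k‖ / dsep ξ k)) * dsep ξ j ≤ ‖x i - x j‖ ∧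
      (1 - pnorm p (fun k => ‖x k - ξ k‖ / dsep ξ k)) * dsep ξ i ≤ ‖x i - ξ j‖ :=
  weierstrass_first_kind_inequalities_general ξ hξ x p q hp hpq
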